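/- Yanov–Muchnik Theorem. For every finite set A with |A| ≥ 3, the set of all clones on A has cardinality 2^{ℵ₀} (the cardinality of the continuum). -/
import Mathlib


universe u

/-- The type of finitary operations (of positive arity `n + 1`) on `A`. -/
abbrev Ops (A : Type u) : Type u := Σ n : ℕ, (Fin (n + 1) → A) → A

/-- A set of finitary operations on `A` is a clone if it contains all projection
operations and is closed under composition. -/
def IsClone {A : Type u} (C : Set (Ops A)) : Prop :=
  (∀ (n : ℕ) (i : Fin (n + 1)), (⟨n, fun x => x i⟩ : Ops A) ∈ C) ∧
  ∀ (n m : ℕ) (f : (Fin (n + 1) → A) → A) (g : Fin (n + 1) → (Fin (m + 1) → A) → A),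
    (⟨n, f⟩ : Ops A) ∈ C → (∀ i, (⟨m, g i⟩ : Ops A) ∈ C) →
    (⟨m, fun x => f fun i => g i x⟩ : Ops A) ∈ C

/-- The clone generated by a set `F` of operations: the least clone containing `F`. -/
def cloneGen {A : Type u} (F : Set (Ops A)) : Set (Ops A) :=
  ⋂₀ {C : Set (Ops A) | IsClone C ∧ F ⊆ C}

/-- The clone of all projection operations on `A`. -/
def projClone (A : Type u) : Set (Ops A) :=
  {f : Ops A | ∃ i : Fin (f.1 + 1), f.2 = fun x => x i}

/-- A clone `M` is maximal if it is a proper subclone of the clone of all operations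
and the clone of all operations is the only clone properly containing it. -/
def IsMaximalClone {A : Type u} (M : Set (Ops A)) : Prop :=
  IsClone M ∧ M ≠ Set.univ ∧
    ∀ D : Set (Ops A), IsClone D → M ⊆ D → D = M ∨ D = Set.univ

/-- A clone `C` is minimal if the clone of projections is its unique proper subclone. -/
def IsMinimalClone {A : Type u} (C : Set (Ops A)) : Prop :=
  IsClone C ∧ C ≠ projClone A ∧
    ∀ D : Set (Ops A), IsClone D → D ⊆ C → D = projClone A ∨ D = C

/-- An `n`-ary operation `f` preserves a `k`-ary relation `ρ` if applying `f`
coordinatewise to tuples from `ρ` always yields a tuple in `ρ`. -/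
def Preserves {A : Type u} {n k : ℕ} (f : (Fin n → A) → A) (ρ : Set (Fin k → A)) : Prop :=
  ∀ t : Fin n → Fin k → A, (∀ i, t i ∈ ρ) → (fun j => f fun i => t i j) ∈ ρ

/-- `Pol ρ` is the clone of all operations preserving the relation `ρ`. -/
def Pol {A : Type u} {k : ℕ} (ρ : Set (Fin k → A)) : Set (Ops A) :=
  {f : Ops A | Preserves f.2 ρ}

section YM

variable {A : Type u}

lemma isClone_cloneGen (F : Set (Ops A)) : IsClone (cloneGen F) := by
  constructor
  · intro n i
    exact Set.mem_sInter.mpr fun C hC => hC.1.1 n i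
  · intro n m f g hf hg
    exact Set.mem_sInter.mpr fun C hC =>
      hC.1.2 n m f g (Set.mem_sInter.mp hf C hC) (fun i => Set.mem_sInter.mp (hg i) C hC)

lemma subset_cloneGen (F : Set (Ops A)) : F ⊆ cloneGen F :=
  fun _ hx => Set.mem_sInter.mpr fun _ hC => hC.2 hx

lemma cloneGen_subset {F C : Set (Ops A)} (hC : IsClone C) (hF : F ⊆ C) :
    cloneGen F ⊆ C :=
  Set.sInter_subset_of_mem ⟨hC, hF⟩

lemma isClone_pol {k : ℕ} (ρ : Set (Fin k → A)) : IsClone (Pol ρ) := by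
  constructor
  · intro n i t ht
    exact ht i
  · intro n m f g hf hg t ht
    exact hf (fun i j => g i fun i' => t i' j) (fun i => hg i t ht)

/-- `x` is a "hot" tuple: exactly one coordinate is `a2` and the rest are `a1`. -/
def IsHot (a1 a2 : A) {n : ℕ} (x : Fin (n + 1) → A) : Prop :=
  ∃ i, x i = a2 ∧ ∀ j, j ≠ i → x j = a1

open Classical in
/-- The Yanov–Muchnik operation of arity `n+1`. -/
noncomputable def hotFun (a0 a1 a2 : A) (n : ℕ) : (Fin (n + 1) → A) → A :=
  fun x => if IsHot a1 a2 x then a1 else a0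

/-- The invariant relation of arity `m+1`. -/
def rho (a0 a1 a2 : A) (m : ℕ) : Set (Fin (m + 1) → A) :=
  {x | IsHot a1 a2 x ∨ ((∀ j, x j = a0 ∨ x j = a1) ∧ ∃ j, x j = a0)}

variable {a0 a1 a2 : A}

lemma hotFun_preserves (h01 : a0 ≠ a1) (h02 : a0 ≠ a2) (h12 : a1 ≠ a2)
    {n m : ℕ} (hnm : n ≠ m) :
    Preserves (hotFun a0 a1 a2 n) (rho a0 a1 a2 m) := by
  intro t ht
  by_cases hall : ∀ j, IsHot a1 a2 (fun i => t i j)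
  · exfalso
    apply hnm
    have hrow : ∀ i, IsHot a1 a2 (t i) := by
      intro i
      rcases ht i with h | ⟨_, j, hj⟩
      · exact h
      · exfalso
        rcases hall j with ⟨i0, hi0, hother⟩
        by_cases hii : i = i0
        · subst hii
          exact h02 (hj.symm.trans hi0)
        · exact h01 (hj.symm.trans (hother i hii))
    choose c hc1 hc2 using hrow
    choose r hr1 hr2 using hall
    have left : ∀ i, r (c i) = i := by
      intro i
      by_contra h
      exact h12 ((hr2 (c i) i (Ne.symm h)).symm.trans (hc1 i))
    have right : ∀ j, c (r j) = j := by
      intro j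
      by_contra h
      exact h12 ((hc2 (r j) j (Ne.symm h)).symm.trans (hr1 j))
    have e : Fin (n + 1) ≃ Fin (m + 1) := ⟨c, r, left, right⟩
    have := Fintype.card_congr e
    simpa using this
  · push_neg at hall
    obtain ⟨j0, hj0⟩ := hall
    right
    constructor
    · intro j
      by_cases h : IsHot a1 a2 (fun i => t i j) <;> simp [hotFun, h]
    · exact ⟨j0, by simp [hotFun, hj0]⟩

lemma hotFun_not_preserves (h01 : a0 ≠ a1) (h12 : a1 ≠ a2) (m : ℕ) :
    ¬ Preserves (hotFun a0 a1 a2 m) (rho a0 a1 a2 m) := by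
  intro h
  have hmem := h (fun i j => if j = i then a2 else a1) ?_
  · have hres : ∀ j : Fin (m + 1),
        hotFun a0 a1 a2 m (fun i => if (j : Fin (m + 1)) = i then a2 else a1) = a1 := by
      intro j
      have hhot : IsHot a1 a2 (fun i => if (j : Fin (m + 1)) = i then a2 else a1) :=
        ⟨j, by simp, fun i hi => by simp [hotFun, (Ne.symm hi : j ≠ i)]⟩
      simp [hotFun, hhot]
    rcases hmem with ⟨i, hi, _⟩ | ⟨_, j, hj⟩
    · exact h12 ((hres i) ▸ hi : a1 = a2)
    · exact h01 ((hres j) ▸ hj : a1 = a0).symm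
  · intro i
    exact Or.inl ⟨i, by simp, fun j hj => by simp [hj]⟩

/-- The generator operation of arity `n+1`. -/
noncomputable def Fop (a0 a1 a2 : A) (n : ℕ) : Ops A := ⟨n, hotFun a0 a1 a2 n⟩

def genSet (a0 a1 a2 : A) (S : Set (ULift.{u} ℕ)) : Set (Ops A) :=
  {o | ∃ n ∈ S, o = Fop a0 a1 a2 (ULift.down n)}

lemma mem_cloneGen_iff (h01 : a0 ≠ a1) (h02 : a0 ≠ a2) (h12 : a1 ≠ a2)
    (S : Set (ULift.{u} ℕ)) (m : ULift.{u} ℕ) :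
    Fop a0 a1 a2 (ULift.down m) ∈ cloneGen (genSet a0 a1 a2 S) ↔ m ∈ S := by
  constructor
  · intro hmem
    by_contra hm
    have hsub : cloneGen (genSet a0 a1 a2 S) ⊆ Pol (rho a0 a1 a2 (ULift.down m)) := by
      apply cloneGen_subset (isClone_pol _)
      rintro o ⟨n, hn, rfl⟩
      have hnm : ULift.down n ≠ ULift.down m := by
        intro hEq
        exact hm (ULift.down_injective hEq ▸ hn)
      exact hotFun_preserves h01 h02 h12 hnm
    exact hotFun_not_preserves h01 h12 (ULift.down m) (hsub hmem)
  · intro hm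
    exact subset_cloneGen _ ⟨m, hm, rfl⟩

end YM

/-- **Yanov–Muchnik Theorem.**  For every finite set `A` with `|A| ≥ 3`, the set of all
clones on `A` has the cardinality of the continuum. -/
theorem yanov_muchnik {A : Type u} [Fintype A] (hA : 3 ≤ Fintype.card A) :
    Cardinal.mk {C : Set (Ops A) // IsClone C} = Cardinal.continuum := by

  classical
  -- obtain three distinct elements of `A`
  obtain ⟨s, -, hs⟩ := Finset.exists_subset_card_eq
    (show 3 ≤ (Finset.univ : Finset A).card by simpa using hA)
  obtain ⟨a0, a1, a2, h01, h02, h12, -⟩ := Finset.card_eq_three.mp hs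
  haveI : Countable (Ops A) := inferInstance
  apply le_antisymm
  · calc Cardinal.mk {C : Set (Ops A) // IsClone C}
        ≤ Cardinal.mk (Set (Ops A)) := Cardinal.mk_subtype_le _
      _ = 2 ^ Cardinal.mk (Ops A) := Cardinal.mk_set
      _ ≤ 2 ^ Cardinal.aleph0 :=
          Cardinal.power_le_power_left two_ne_zero Cardinal.mk_le_aleph0
      _ = Cardinal.continuum := Cardinal.two_power_aleph0
  · have hinj : Function.Injective
        (fun S : Set (ULift.{u} ℕ) =>
          (⟨cloneGen (genSet a0 a1 a2 S), isClone_cloneGen _⟩ :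
            {C : Set (Ops A) // IsClone C})) := by
      intro S T hST
      have h' : cloneGen (genSet a0 a1 a2 S) = cloneGen (genSet a0 a1 a2 T) :=
        congrArg Subtype.val hST
      ext m
      rw [← mem_cloneGen_iff h01 h02 h12 S m, ← mem_cloneGen_iff h01 h02 h12 T m, h']
    have hle := Cardinal.mk_le_of_injective hinj
    have hmk : Cardinal.mk (Set (ULift.{u} ℕ)) = Cardinal.continuum := by
      simp [Cardinal.mk_set, Cardinal.mk_uLift, Cardinal.two_power_aleph0]
    rw [← hmk]
    exact hle
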